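/- arXiv:2101.12714 — 3 statements merged into one kernel-verified Lean document; each statement's English description precedes it below -/
import Mathlib

section
/- Let G be a finite abelian group of odd order and f, g, h : G² → ℂ with values bounded by 1 in absolute value. Then |Λ(f,g,h)| ≤ min{‖f̂‖_∞, ‖ĝ‖_∞, ‖ĥ‖_∞}, where Λ(f,g,h) := |G|^{-4} Σ_{x,y,s,t} f(x,y) g(x+s,y+t) h(x−t,y+s) and ‖·‖_∞ denotes the maximum absolute value of a Fourier coefficient over Ĝ². -/
/-!
Expanding `g` by Fourier inversion and substituting `(s, t) ↦ (x - t, y + s)` turns `Λ(f, g, h)`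
into `∑_κ f̂(twist κ) ĝ(κ) ĥ(rot κ)` over `κ ∈ Ĝ²`. Both `twist` and `rot` permute `Ĝ²` (for
`twist` because squaring is a bijection of `Ĝ` when `|G|` is odd), so by Parseval each of the three
coefficient families has `ℓ²` norm at most `1`. Bounding one factor by its supremum and the other
two by AM–GM gives each of the three bounds.
-/

open Finset ComplexConjugate

lemma norm_sum_mul_mul_le {ι : Type*} [Fintype ι] {a b c : ι → ℂ} {M : ℝ} (hM : 0 ≤ M)
    (ha : ∀ i, ‖a i‖ ≤ M) (hb : ∑ i, ‖b i‖ ^ 2 ≤ 1) (hc : ∑ i, ‖c i‖ ^ 2 ≤ 1) :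
    ‖∑ i, a i * b i * c i‖ ≤ M :=
  calc ‖∑ i, a i * b i * c i‖ ≤ ∑ i, ‖a i‖ * (‖b i‖ * ‖c i‖) := by
        refine (norm_sum_le _ _).trans_eq (sum_congr rfl fun i _ => ?_)
        rw [norm_mul, norm_mul, mul_assoc]
    _ ≤ ∑ i, M * ((‖b i‖ ^ 2 + ‖c i‖ ^ 2) / 2) := by
        gcongr with i
        · exact ha i
        · linarith [two_mul_le_add_sq ‖b i‖ ‖c i‖]
    _ = M * ((∑ i, ‖b i‖ ^ 2 + ∑ i, ‖c i‖ ^ 2) / 2) := by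
        rw [← mul_sum, ← sum_div, sum_add_distrib]
    _ ≤ M := mul_le_of_le_one_right hM (by linarith)

namespace DoubleFourier

variable {G : Type*} [AddCommGroup G] [Fintype G]

noncomputable def coeff (F : G × G → ℂ) (κ : AddChar G ℂ × AddChar G ℂ) : ℂ :=
  (Fintype.card G : ℂ)⁻¹ ^ 2 * ∑ x : G, ∑ y : G, F (x, y) * conj (κ.1 x) * conj (κ.2 y)

lemma card_ne_zero_complex : (Fintype.card G : ℂ) ≠ 0 :=
  Nat.cast_ne_zero.2 Fintype.card_ne_zero

lemma sum_mul_conj_eq (F : G × G → ℂ) (κ : AddChar G ℂ × AddChar G ℂ) :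
    ∑ p : G × G, F p * conj (κ.1 p.1) * conj (κ.2 p.2) =
      (Fintype.card G : ℂ) ^ 2 * coeff F κ := by
  rw [coeff, ← mul_assoc, ← mul_pow, mul_inv_cancel₀ card_ne_zero_complex, one_pow, one_mul,
    Fintype.sum_prod_type]

lemma sum_apply_mul_apply_eq_ite [DecidableEq G] (u : G × G) :
    ∑ κ : AddChar G ℂ × AddChar G ℂ, κ.1 u.1 * κ.2 u.2 =
      if u = 0 then (Fintype.card G : ℂ) ^ 2 else 0 := by
  rw [Fintype.sum_prod_type]
  dsimp only
  rw [← sum_mul_sum, AddChar.sum_apply_eq_ite, AddChar.sum_apply_eq_ite]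
  split_ifs <;> simp_all [Prod.ext_iff, sq]

lemma conj_apply_mul_apply (ψ : AddChar G ℂ) (a b : G) : conj (ψ a) * ψ b = ψ (b - a) := by
  rw [← AddChar.map_neg_eq_conj, ← AddChar.map_add_eq_mul, neg_add_eq_sub]

theorem sum_coeff_mul_apply (F : G × G → ℂ) (u : G × G) :
    ∑ κ : AddChar G ℂ × AddChar G ℂ, coeff F κ * κ.1 u.1 * κ.2 u.2 = F u := by
  classical
  have hsum : ∀ κ : AddChar G ℂ × AddChar G ℂ, coeff F κ * κ.1 u.1 * κ.2 u.2 =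
      (Fintype.card G : ℂ)⁻¹ ^ 2 * ∑ p : G × G, F p * (κ.1 (u - p).1 * κ.2 (u - p).2) := by
    intro κ
    rw [coeff, ← Fintype.sum_prod_type', mul_assoc, mul_assoc, sum_mul]
    congr 1
    refine sum_congr rfl fun p _ => ?_
    rw [Prod.fst_sub, Prod.snd_sub, ← conj_apply_mul_apply, ← conj_apply_mul_apply]
    ring
  simp_rw [hsum, ← mul_sum]
  rw [sum_comm]
  simp_rw [← mul_sum, sum_apply_mul_apply_eq_ite, sub_eq_zero, mul_ite, mul_zero, sum_ite_eq,
    mem_univ, if_true]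
  field_simp [card_ne_zero_complex]

theorem sum_norm_sq_coeff (F : G × G → ℂ) :
    (Fintype.card G : ℝ) ^ 2 * ∑ κ : AddChar G ℂ × AddChar G ℂ, ‖coeff F κ‖ ^ 2 =
      ∑ p : G × G, ‖F p‖ ^ 2 := by
  have key : (Fintype.card G : ℂ) ^ 2 * ∑ κ : AddChar G ℂ × AddChar G ℂ,
      coeff F κ * conj (coeff F κ) = ∑ p : G × G, F p * conj (F p) :=
    calc (Fintype.card G : ℂ) ^ 2 * ∑ κ : AddChar G ℂ × AddChar G ℂ,
          coeff F κ * conj (coeff F κ)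
        = ∑ κ : AddChar G ℂ × AddChar G ℂ,
            coeff F κ * conj (∑ p : G × G, F p * conj (κ.1 p.1) * conj (κ.2 p.2)) := by
          rw [mul_sum]
          refine sum_congr rfl fun κ _ => ?_
          rw [sum_mul_conj_eq, map_mul, map_pow, Complex.conj_natCast]
          ring
      _ = ∑ p : G × G, (∑ κ : AddChar G ℂ × AddChar G ℂ, coeff F κ * κ.1 p.1 * κ.2 p.2) *
            conj (F p) := by
          simp_rw [map_sum, map_mul, Complex.conj_conj, mul_sum, sum_mul]
          rw [sum_comm]
          exact sum_congr rfl fun p _ => sum_congr rfl fun κ _ => by ring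
      _ = ∑ p : G × G, F p * conj (F p) := by simp_rw [sum_coeff_mul_apply]
  simp_rw [Complex.mul_conj'] at key
  exact_mod_cast key

lemma sum_norm_sq_coeff_le_one {F : G × G → ℂ} (hF : ∀ p, ‖F p‖ ≤ 1) :
    ∑ κ : AddChar G ℂ × AddChar G ℂ, ‖coeff F κ‖ ^ 2 ≤ 1 := by
  have hcard : (0 : ℝ) < (Fintype.card G : ℝ) ^ 2 := by positivity
  have hF2 : ∑ p : G × G, ‖F p‖ ^ 2 ≤ (Fintype.card G : ℝ) ^ 2 := by
    calc ∑ p : G × G, ‖F p‖ ^ 2 ≤ ∑ _p : G × G, (1 : ℝ) :=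
          sum_le_sum fun p _ => pow_le_one₀ (norm_nonneg _) (hF p)
      _ = (Fintype.card G : ℝ) ^ 2 := by simp [sq]
  rw [← sum_norm_sq_coeff] at hF2
  exact (mul_le_iff_le_one_right hcard).1 hF2

def twist (κ : AddChar G ℂ × AddChar G ℂ) : AddChar G ℂ × AddChar G ℂ :=
  ((κ.1 * κ.2)⁻¹, κ.1 * κ.2⁻¹)

def rot (κ : AddChar G ℂ × AddChar G ℂ) : AddChar G ℂ × AddChar G ℂ :=
  (κ.2, κ.1⁻¹)

lemma twist_bijective (hodd : Odd (Fintype.card G)) :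
    Function.Bijective (twist : AddChar G ℂ × AddChar G ℂ → AddChar G ℂ × AddChar G ℂ) := by
  have hsq : Function.Injective (fun ψ : AddChar G ℂ => ψ ^ 2) := by
    refine (Nat.Coprime.pow_left_bijective ?_).injective
    rw [Nat.card_eq_fintype_card, AddChar.card_eq]
    exact Nat.coprime_two_right.2 hodd
  refine Function.Injective.bijective_of_finite fun κ κ' he => ?_
  obtain ⟨h1, h2⟩ := Prod.mk.inj he
  have hprod : κ.1 * κ.2 = κ'.1 * κ'.2 := inv_injective h1
  have hsq_eq (ψ φ : AddChar G ℂ) : (ψ * φ) * (ψ * φ⁻¹) = ψ ^ 2 := by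
    rw [mul_mul_mul_comm, mul_inv_cancel, mul_one, sq]
  have hfst : κ.1 = κ'.1 := hsq <| by
    dsimp only
    rw [← hsq_eq κ.1 κ.2, ← hsq_eq κ'.1 κ'.2, hprod, h2]
  exact Prod.ext hfst (mul_left_cancel (hfst ▸ hprod))

lemma rot_bijective :
    Function.Bijective (rot : AddChar G ℂ × AddChar G ℂ → AddChar G ℂ × AddChar G ℂ) :=
  Function.Injective.bijective_of_finite fun _ _ he =>
    Prod.ext (inv_injective (Prod.ext_iff.1 he).2) (Prod.ext_iff.1 he).1

lemma sum_rotatedCorner_eq (f g h : G × G → ℂ) :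
    ∑ x : G, ∑ y : G, ∑ s : G, ∑ t : G, f (x, y) * g (x + s, y + t) * h (x - t, y + s) =
      ∑ a : G × G, ∑ c : G × G, f a * g (a.1 - a.2 + c.2, a.1 + a.2 - c.1) * h c := by
  rw [← Fintype.sum_prod_type']
  refine sum_congr rfl fun a _ => ?_
  rw [← Fintype.sum_prod_type']
  refine Fintype.sum_equiv
    ⟨fun st => (a.1 - st.2, a.2 + st.1), fun c => (c.2 - a.2, a.1 - c.1), ?_, ?_⟩ _ _ ?_
  · intro st; ext <;> simp
  · intro c; ext <;> simp
  · intro st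
    simp only [Equiv.coe_fn_mk, Prod.mk.eta]
    congr 3
    ext <;> dsimp only <;> abel

lemma apply_mul_apply_eq_conj (κ : AddChar G ℂ × AddChar G ℂ) (a c : G × G) :
    κ.1 (a.1 - a.2 + c.2) * κ.2 (a.1 + a.2 - c.1) =
      (conj ((twist κ).1 a.1) * conj ((twist κ).2 a.2)) *
        (conj ((rot κ).1 c.1) * conj ((rot κ).2 c.2)) := by
  simp only [twist, rot, map_mul, ← AddChar.map_neg_eq_conj, AddChar.inv_apply,
    AddChar.mul_apply, neg_neg, sub_eq_add_neg, AddChar.map_add_eq_mul]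
  ring

theorem lambda_eq_sum_coeff (f g h : G × G → ℂ) :
    (Fintype.card G : ℂ)⁻¹ ^ 4 *
        ∑ x : G, ∑ y : G, ∑ s : G, ∑ t : G, f (x, y) * g (x + s, y + t) * h (x - t, y + s) =
      ∑ κ : AddChar G ℂ × AddChar G ℂ, coeff f (twist κ) * coeff g κ * coeff h (rot κ) := by
  set N : ℂ := (Fintype.card G : ℂ) with hN
  have hN0 : N ≠ 0 := card_ne_zero_complex
  calc N⁻¹ ^ 4 * ∑ x : G, ∑ y : G, ∑ s : G, ∑ t : G,
        f (x, y) * g (x + s, y + t) * h (x - t, y + s)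
      = N⁻¹ ^ 4 * ∑ a : G × G, ∑ c : G × G, ∑ κ : AddChar G ℂ × AddChar G ℂ, coeff g κ *
          ((f a * conj ((twist κ).1 a.1) * conj ((twist κ).2 a.2)) *
          (h c * conj ((rot κ).1 c.1) * conj ((rot κ).2 c.2))) := by
        rw [sum_rotatedCorner_eq]
        congr 1
        refine sum_congr rfl fun a _ => sum_congr rfl fun c _ => ?_
        rw [← sum_coeff_mul_apply g, mul_sum, sum_mul]
        refine sum_congr rfl fun κ _ => ?_
        dsimp only
        rw [mul_assoc (coeff g κ), apply_mul_apply_eq_conj]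
        ring
    _ = N⁻¹ ^ 4 * ∑ κ : AddChar G ℂ × AddChar G ℂ, coeff g κ *
          ((∑ a : G × G, f a * conj ((twist κ).1 a.1) * conj ((twist κ).2 a.2)) *
          (∑ c : G × G, h c * conj ((rot κ).1 c.1) * conj ((rot κ).2 c.2))) := by
        congr 1
        simp_rw [sum_mul_sum, mul_sum]
        exact (sum_congr rfl fun _ _ => sum_comm).trans sum_comm
    _ = ∑ κ : AddChar G ℂ × AddChar G ℂ, coeff f (twist κ) * coeff g κ * coeff h (rot κ) := by
        rw [mul_sum]
        refine sum_congr rfl fun κ _ => ?_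
        rw [sum_mul_conj_eq, sum_mul_conj_eq, ← hN]
        field_simp

end DoubleFourier

open DoubleFourier in
/-- For a finite abelian group `G` of odd order and `f,g,h : G² → ℂ`
bounded by 1, the counting form `Λ(f,g,h)` is bounded by the minimum of the `ℓ^∞`
norms of the Fourier transforms of `f`, `g`, `h` over `Ĝ²`. -/
theorem lambda_uniformity_bound (G : Type*) [AddCommGroup G] [Fintype G]
    (hodd : Odd (Fintype.card G)) (f g h : G × G → ℂ)
    (hf : ∀ p, ‖f p‖ ≤ 1) (hg : ∀ p, ‖g p‖ ≤ 1) (hh : ∀ p, ‖h p‖ ≤ 1)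
    (Λ : (G × G → ℂ) → (G × G → ℂ) → (G × G → ℂ) → ℂ)
    (hΛ : ∀ f g h, Λ f g h = ((Fintype.card G : ℂ))⁻¹ ^ 4 *
      ∑ x : G, ∑ y : G, ∑ s : G, ∑ t : G,
        f (x, y) * g (x + s, y + t) * h (x - t, y + s))
    (hat : (G × G → ℂ) → AddChar G ℂ → AddChar G ℂ → ℂ)
    (hhat : ∀ F ξ ζ, hat F ξ ζ = ((Fintype.card G : ℂ))⁻¹ ^ 2 *
      ∑ x : G, ∑ y : G, F (x, y) * (starRingEnd ℂ) (ξ x) * (starRingEnd ℂ) (ζ y)) :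
    ‖Λ f g h‖ ≤ min (min (⨆ p : AddChar G ℂ × AddChar G ℂ, ‖hat f p.1 p.2‖)
      (⨆ p : AddChar G ℂ × AddChar G ℂ, ‖hat g p.1 p.2‖))
      (⨆ p : AddChar G ℂ × AddChar G ℂ, ‖hat h p.1 p.2‖) := by
  have hat_eq : ∀ F ξ ζ, hat F ξ ζ = coeff F (ξ, ζ) := hhat
  have le_sup (F : G × G → ℂ) (κ : AddChar G ℂ × AddChar G ℂ) :
      ‖coeff F κ‖ ≤ ⨆ p : AddChar G ℂ × AddChar G ℂ, ‖coeff F p‖ :=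
    le_ciSup (f := fun p => ‖coeff F p‖) (Set.finite_range _).bddAbove κ
  have sup_nonneg (F : G × G → ℂ) : 0 ≤ ⨆ p : AddChar G ℂ × AddChar G ℂ, ‖coeff F p‖ :=
    (norm_nonneg _).trans (le_sup F 1)
  have l2f : ∑ κ, ‖coeff f (twist κ)‖ ^ 2 ≤ 1 := by
    rw [(twist_bijective hodd).sum_comp fun κ => ‖coeff f κ‖ ^ 2]
    exact sum_norm_sq_coeff_le_one hf
  have l2g : ∑ κ, ‖coeff g κ‖ ^ 2 ≤ 1 := sum_norm_sq_coeff_le_one hg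
  have l2h : ∑ κ, ‖coeff h (rot κ)‖ ^ 2 ≤ 1 := by
    rw [rot_bijective.sum_comp fun κ => ‖coeff h κ‖ ^ 2]
    exact sum_norm_sq_coeff_le_one hh
  simp only [hat_eq, Prod.mk.eta]
  rw [hΛ, lambda_eq_sum_coeff]
  refine le_min (le_min ?_ ?_) ?_
  · exact norm_sum_mul_mul_le (sup_nonneg f) (fun _ => le_sup f _) l2g l2h
  · simp_rw [mul_comm (coeff f _) (coeff g _)]
    exact norm_sum_mul_mul_le (sup_nonneg g) (le_sup g) l2f l2h
  · simp_rw [← mul_rotate (coeff h _)]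
    exact norm_sum_mul_mul_le (sup_nonneg h) (fun _ => le_sup h _) l2f l2g
end

section
/- Let G be a finite abelian group of odd order and f, g, h : G² → ℂ, χ : G → ℂ. Then |Λ_χ(f,g,h)| ≤ ‖f̂‖_{ℓ^∞(Ĝ²)} · ‖g‖_{L²(G²)} · ‖h‖_{L²(G²)} · ‖χ̂‖_{ℓ¹(Ĝ)}², where Λ_χ(f,g,h) := |G|^{-4} Σ_{x,y,s,t} f(x,y) g(x+s,y+t) h(x−t,y+s) χ(s) χ(t). -/
open Finset Function

set_option linter.unusedSectionVars false

namespace LambdaAux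

variable {G : Type*} [AddCommGroup G] [Fintype G]



lemma conj_mul_apply (ξ : AddChar G ℂ) (u s : G) :
    (starRingEnd ℂ) (ξ u) * ξ s = ξ (s - u) := by
  rw [← AddChar.map_neg_eq_conj, ← AddChar.map_add_eq_mul, neg_add_eq_sub]

lemma fourier_inversion (k : G → ℂ) (s : G) :
    ∑ ξ : AddChar G ℂ,
      (((Fintype.card G : ℂ))⁻¹ * ∑ u : G, k u * (starRingEnd ℂ) (ξ u)) * ξ s = k s := by
  classical
  have hN : (Fintype.card G : ℂ) ≠ 0 := Nat.cast_ne_zero.2 Fintype.card_ne_zero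
  have e1 : ∀ ξ : AddChar G ℂ,
      (((Fintype.card G : ℂ))⁻¹ * ∑ u : G, k u * (starRingEnd ℂ) (ξ u)) * ξ s
      = ((Fintype.card G : ℂ))⁻¹ * ∑ u : G, k u * ξ (s - u) := by
    intro ξ
    rw [mul_assoc, Finset.sum_mul]
    congr 1
    refine Finset.sum_congr rfl fun u _ => ?_
    rw [mul_assoc, conj_mul_apply]
  rw [Finset.sum_congr rfl fun ξ _ => e1 ξ, ← Finset.mul_sum, Finset.sum_comm]
  have e2 : ∀ u : G, (∑ ξ : AddChar G ℂ, k u * ξ (s - u))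
      = if u = s then k u * (Fintype.card G : ℂ) else 0 := by
    intro u
    rw [← Finset.mul_sum, AddChar.sum_apply_eq_ite, sub_eq_zero]
    by_cases hu : u = s
    · simp [hu]
    · simp [hu, Ne.symm hu]
  rw [Finset.sum_congr rfl fun u _ => e2 u, Finset.sum_ite_eq' Finset.univ s]
  simp only [Finset.mem_univ, if_true]
  field_simp

lemma fourier_inversion2 (k : G × G → ℂ) (x y : G) :
    ∑ α : AddChar G ℂ, ∑ β : AddChar G ℂ,
      ((((Fintype.card G : ℂ))⁻¹ ^ 2 *
        ∑ a : G, ∑ b : G, k (a, b) * (starRingEnd ℂ) (α a) * (starRingEnd ℂ) (β b))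
        * α x) * β y = k (x, y) := by
  classical
  have step1 : ∀ α β : AddChar G ℂ,
      (((Fintype.card G : ℂ))⁻¹ ^ 2 *
        ∑ a : G, ∑ b : G, k (a, b) * (starRingEnd ℂ) (α a) * (starRingEnd ℂ) (β b))
      = ((Fintype.card G : ℂ))⁻¹ * ∑ b : G,
          (((Fintype.card G : ℂ))⁻¹ * ∑ a : G, k (a, b) * (starRingEnd ℂ) (α a))
            * (starRingEnd ℂ) (β b) := by
    intro α β
    rw [pow_two, Finset.sum_comm]
    simp only [Finset.mul_sum, Finset.sum_mul]
    refine Finset.sum_congr rfl fun b _ => Finset.sum_congr rfl fun a _ => ?_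
    ring
  have step2 : ∀ α : AddChar G ℂ,
      (∑ β : AddChar G ℂ,
        ((((Fintype.card G : ℂ))⁻¹ ^ 2 *
          ∑ a : G, ∑ b : G, k (a, b) * (starRingEnd ℂ) (α a) * (starRingEnd ℂ) (β b))
          * α x) * β y)
      = (((Fintype.card G : ℂ))⁻¹ * ∑ a : G, k (a, y) * (starRingEnd ℂ) (α a)) * α x := by
    intro α
    have e : ∀ β : AddChar G ℂ,
        ((((Fintype.card G : ℂ))⁻¹ ^ 2 *
          ∑ a : G, ∑ b : G, k (a, b) * (starRingEnd ℂ) (α a) * (starRingEnd ℂ) (β b))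
          * α x) * β y
        = (((((Fintype.card G : ℂ))⁻¹ * ∑ u : G,
            (fun b => ((Fintype.card G : ℂ))⁻¹ * ∑ a : G, k (a, b) * (starRingEnd ℂ) (α a)) u
              * (starRingEnd ℂ) (β u)) * β y)) * α x := by
      intro β
      rw [step1 α β]; ring
    rw [Finset.sum_congr rfl fun β _ => e β, ← Finset.sum_mul,
      fourier_inversion (fun b => ((Fintype.card G : ℂ))⁻¹ * ∑ a : G, k (a, b) * (starRingEnd ℂ) (α a)) y]
  rw [Finset.sum_congr rfl fun α _ => step2 α,
    fourier_inversion (fun a => k (a, y)) x]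




lemma conj_mul_apply' (ξ : AddChar G ℂ) (u s : G) :
    (starRingEnd ℂ) (ξ u) * ξ s = ξ (s - u) := by
  rw [← AddChar.map_neg_eq_conj, ← AddChar.map_add_eq_mul, neg_add_eq_sub]

lemma parseval_core (k : G → ℂ) :
    ∑ u : AddChar G ℂ, (∑ a : G, k a * u a) * (starRingEnd ℂ) (∑ a : G, k a * u a)
      = (Fintype.card G : ℂ) * ∑ a : G, ((‖k a‖ : ℂ)) ^ 2 := by
  classical
  have e1 : ∀ u : AddChar G ℂ,
      (∑ a : G, k a * u a) * (starRingEnd ℂ) (∑ a : G, k a * u a)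
      = ∑ a : G, ∑ c : G, (k a * (starRingEnd ℂ) (k c)) * u (a - c) := by
    intro u
    rw [map_sum, Finset.sum_mul_sum]
    refine Finset.sum_congr rfl fun a _ => Finset.sum_congr rfl fun c _ => ?_
    rw [map_mul, show (k a * u a) * ((starRingEnd ℂ) (k c) * (starRingEnd ℂ) (u c))
      = (k a * (starRingEnd ℂ) (k c)) * ((starRingEnd ℂ) (u c) * u a) from by ring,
      conj_mul_apply']
  rw [Finset.sum_congr rfl fun u _ => e1 u, Finset.sum_comm]
  have e2 : ∀ a : G, (∑ u : AddChar G ℂ, ∑ c : G, (k a * (starRingEnd ℂ) (k c)) * u (a - c))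
      = (Fintype.card G : ℂ) * ((‖k a‖ : ℂ)) ^ 2 := by
    intro a
    rw [Finset.sum_comm]
    have e3 : ∀ c : G, (∑ u : AddChar G ℂ, (k a * (starRingEnd ℂ) (k c)) * u (a - c))
        = if c = a then (k a * (starRingEnd ℂ) (k a)) * (Fintype.card G : ℂ) else 0 := by
      intro c
      rw [← Finset.mul_sum, AddChar.sum_apply_eq_ite, sub_eq_zero]
      by_cases hc : c = a
      · simp [hc]
      · simp [hc, Ne.symm hc]
    rw [Finset.sum_congr rfl fun c _ => e3 c, Finset.sum_ite_eq' Finset.univ a]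
    simp only [Finset.mem_univ, if_true]
    rw [Complex.mul_conj']
    ring
  rw [Finset.sum_congr rfl fun a _ => e2 a, ← Finset.mul_sum]

lemma parseval1 (k : G → ℂ) :
    ∑ u : AddChar G ℂ, ‖((Fintype.card G : ℂ))⁻¹ * ∑ a : G, k a * u a‖ ^ 2
      = ((Fintype.card G : ℝ))⁻¹ * ∑ a : G, ‖k a‖ ^ 2 := by
  have hN : (Fintype.card G : ℝ) ≠ 0 := Nat.cast_ne_zero.2 Fintype.card_ne_zero
  have key : ∑ u : AddChar G ℂ, ‖∑ a : G, k a * u a‖ ^ 2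
      = (Fintype.card G : ℝ) * ∑ a : G, ‖k a‖ ^ 2 := by
    have := parseval_core k
    have h2 : ((∑ u : AddChar G ℂ, ‖∑ a : G, k a * u a‖ ^ 2 : ℝ) : ℂ)
        = (((Fintype.card G : ℝ) * ∑ a : G, ‖k a‖ ^ 2 : ℝ) : ℂ) := by
      push_cast
      rw [← parseval_core k]
      refine Finset.sum_congr rfl fun u _ => ?_
      rw [Complex.mul_conj']
    exact_mod_cast h2
  have e : ∀ u : AddChar G ℂ, ‖((Fintype.card G : ℂ))⁻¹ * ∑ a : G, k a * u a‖ ^ 2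
      = ((Fintype.card G : ℝ))⁻¹ ^ 2 * ‖∑ a : G, k a * u a‖ ^ 2 := by
    intro u
    rw [norm_mul, mul_pow, norm_inv, Complex.norm_natCast]
  rw [Finset.sum_congr rfl fun u _ => e u, ← Finset.mul_sum, key]
  field_simp

lemma parseval2 (k : G × G → ℂ) :
    ∑ u : AddChar G ℂ, ∑ v : AddChar G ℂ,
      ‖((Fintype.card G : ℂ))⁻¹ ^ 2 * ∑ a : G, ∑ b : G, k (a, b) * u a * v b‖ ^ 2
      = ((Fintype.card G : ℝ))⁻¹ ^ 2 * ∑ a : G, ∑ b : G, ‖k (a, b)‖ ^ 2 := by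
  classical
  rw [Finset.sum_comm]
  have inner : ∀ v : AddChar G ℂ,
      (∑ u : AddChar G ℂ,
        ‖((Fintype.card G : ℂ))⁻¹ ^ 2 * ∑ a : G, ∑ b : G, k (a, b) * u a * v b‖ ^ 2)
      = ((Fintype.card G : ℝ))⁻¹ *
          ∑ a : G, ‖((Fintype.card G : ℂ))⁻¹ * ∑ b : G, k (a, b) * v b‖ ^ 2 := by
    intro v
    have e : ∀ u : AddChar G ℂ,
        ‖((Fintype.card G : ℂ))⁻¹ ^ 2 * ∑ a : G, ∑ b : G, k (a, b) * u a * v b‖ ^ 2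
        = ‖((Fintype.card G : ℂ))⁻¹ *
            ∑ a : G, (fun a => ((Fintype.card G : ℂ))⁻¹ * ∑ b : G, k (a, b) * v b) a * u a‖ ^ 2 := by
      intro u
      have hxy : ((Fintype.card G : ℂ))⁻¹ ^ 2 * ∑ a : G, ∑ b : G, k (a, b) * u a * v b
          = ((Fintype.card G : ℂ))⁻¹ *
            ∑ a : G, (fun a => ((Fintype.card G : ℂ))⁻¹ * ∑ b : G, k (a, b) * v b) a * u a := by
        rw [pow_two, mul_assoc, Finset.mul_sum]
        refine congrArg _ (Finset.sum_congr rfl fun a _ => ?_)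
        simp only [Finset.mul_sum, Finset.sum_mul]
        refine Finset.sum_congr rfl fun b _ => ?_
        ring
      rw [hxy]
    rw [Finset.sum_congr rfl fun u _ => e u,
      parseval1 (fun a => ((Fintype.card G : ℂ))⁻¹ * ∑ b : G, k (a, b) * v b)]
  rw [Finset.sum_congr rfl fun v _ => inner v, ← Finset.mul_sum, Finset.sum_comm]
  have e2 : ∀ a : G,
      (∑ v : AddChar G ℂ, ‖((Fintype.card G : ℂ))⁻¹ * ∑ b : G, k (a, b) * v b‖ ^ 2)
      = ((Fintype.card G : ℝ))⁻¹ * ∑ b : G, ‖k (a, b)‖ ^ 2 := fun a =>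
    parseval1 (fun b => k (a, b))
  rw [Finset.sum_congr rfl fun a _ => e2 a, ← Finset.mul_sum, ← mul_assoc, ← pow_two]




-- from a.lean
lemma sq_injective {H : Type*} [CommGroup H] [Fintype H] (hodd : Odd (Fintype.card H)) :
    Function.Injective (fun x : H => x * x) := by
  obtain ⟨m, hm⟩ := hodd
  have key : ∀ x : H, (x * x) ^ (m + 1) = x := by
    intro x
    have h2 : 2 * (m + 1) = Fintype.card H + 1 := by omega
    rw [← pow_two, ← pow_mul, h2, pow_succ, pow_card_eq_one, one_mul]
  intro a b hab
  simp only at hab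
  rw [← key a, ← key b, hab]

lemma dbl_injective (hodd : Odd (Fintype.card G)) :
    Function.Injective (fun x : G => x + x) := by
  obtain ⟨m, hm⟩ := hodd
  have key : ∀ x : G, (m + 1) • (x + x) = x := by
    intro x
    have h2 : (m + 1) * 2 = Fintype.card G + 1 := by omega
    rw [← two_nsmul, smul_smul, h2, add_nsmul, card_nsmul_eq_zero, one_nsmul, zero_add]
  intro a b hab
  simp only at hab
  rw [← key a, ← key b, hab]

def dblHom : G →+ G := AddMonoidHom.mk' (fun x => x + x) (fun a b => by abel)

noncomputable def halfEquiv (hodd : Odd (Fintype.card G)) : G ≃+ G :=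
  AddEquiv.ofBijective (dblHom (G := G))
    (Finite.injective_iff_bijective.1 (dbl_injective hodd))

lemma halfEquiv_symm_double (hodd : Odd (Fintype.card G)) (x : G) :
    (halfEquiv hodd).symm (x + x) = x :=
  (halfEquiv hodd).symm_apply_apply x

-- new material
noncomputable def rr (hodd : Odd (Fintype.card G)) : G →+ G :=
  ((halfEquiv hodd).symm : G ≃+ G).toAddMonoidHom

lemma rr_double (hodd : Odd (Fintype.card G)) (x : G) : rr hodd (x + x) = x :=
  halfEquiv_symm_double hodd x

lemma rr_surjective (hodd : Odd (Fintype.card G)) : Surjective (rr hodd) :=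
  (halfEquiv hodd).symm.surjective

def shear : (G × G) × (G × G) → (G × G) × (G × G) := fun p =>
  ((p.1.1 + p.2.1, p.1.2 + p.2.2), (p.1.1 - p.2.2, p.1.2 + p.2.1))

noncomputable def shearInv (hodd : Odd (Fintype.card G)) :
    (G × G) × (G × G) → (G × G) × (G × G) := fun q =>
  ((( halfEquiv hodd).symm (q.1.1 + q.1.2 + (q.2.1 - q.2.2)),
    (halfEquiv hodd).symm (q.1.2 + q.2.1 + (q.2.2 - q.1.1))),
   (q.1.1 - (halfEquiv hodd).symm (q.1.1 + q.1.2 + (q.2.1 - q.2.2)),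
    q.1.2 - (halfEquiv hodd).symm (q.1.2 + q.2.1 + (q.2.2 - q.1.1))))

lemma shear_bijective (hodd : Odd (Fintype.card G)) : Bijective (shear (G := G)) := by
  rw [← Finite.injective_iff_bijective]
  have hli : LeftInverse (shearInv hodd) shear := by
    rintro ⟨⟨x, y⟩, ⟨s, t⟩⟩
    simp only [shear, shearInv]
    have hx : (x + s) + (y + t) + ((x - t) - (y + s)) = x + x := by abel
    have hy : (y + t) + (x - t) + ((y + s) - (x + s)) = y + y := by abel
    rw [hx, hy, halfEquiv_symm_double, halfEquiv_symm_double,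
      show x + s - x = s from by abel, show y + t - y = t from by abel]
  exact hli.injective

noncomputable def phiP (hodd : Odd (Fintype.card G)) (ξ α : AddChar G ℂ) : AddChar G ℂ :=
  (α * ξ⁻¹).compAddMonoidHom (rr hodd)

noncomputable def chiA (hodd : Odd (Fintype.card G)) (ξ ζ α β : AddChar G ℂ) :
    AddChar G ℂ × AddChar G ℂ :=
  (phiP hodd ξ α * (phiP hodd ζ β)⁻¹ * ξ, phiP hodd ξ α * phiP hodd ζ β * ζ)

noncomputable def chiC (hodd : Odd (Fintype.card G)) (ξ ζ α β : AddChar G ℂ) :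
    AddChar G ℂ × AddChar G ℂ :=
  (phiP hodd ξ α * phiP hodd ζ β, (phiP hodd ξ α)⁻¹ * phiP hodd ζ β)

lemma phiP_injective (hodd : Odd (Fintype.card G)) (ξ : AddChar G ℂ) :
    Injective (phiP hodd ξ) := by
  intro α α' hh
  have h2 := AddChar.compAddMonoidHom_injective_left (M := ℂ) (rr hodd) (rr_surjective hodd) hh
  exact mul_right_cancel h2

lemma oddDual (hodd : Odd (Fintype.card G)) : Odd (Fintype.card (AddChar G ℂ)) := by
  rwa [AddChar.card_eq]

lemma chiA_injective (hodd : Odd (Fintype.card G)) (ξ ζ : AddChar G ℂ) :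
    Injective (fun p : AddChar G ℂ × AddChar G ℂ => chiA hodd ξ ζ p.1 p.2) := by
  rintro ⟨α, β⟩ ⟨α', β'⟩ hh
  simp only [chiA, Prod.mk.injEq] at hh
  obtain ⟨h1, h2⟩ := hh
  have h1' : phiP hodd ξ α * (phiP hodd ζ β)⁻¹ = phiP hodd ξ α' * (phiP hodd ζ β')⁻¹ :=
    mul_right_cancel h1
  have h2' : phiP hodd ξ α * phiP hodd ζ β = phiP hodd ξ α' * phiP hodd ζ β' :=
    mul_right_cancel h2
  have e : ∀ a b : AddChar G ℂ, a * a = (a * b⁻¹) * (a * b) := by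
    intro a b; rw [mul_mul_mul_comm, inv_mul_cancel, mul_one]
  have hsq : phiP hodd ξ α * phiP hodd ξ α = phiP hodd ξ α' * phiP hodd ξ α' := by
    rw [e _ (phiP hodd ζ β), h1', h2', ← e _ (phiP hodd ζ β')]
  have hα : α = α' := phiP_injective hodd ξ (sq_injective (oddDual hodd) hsq)
  have hβ : β = β' := by
    refine phiP_injective hodd ζ (mul_left_cancel (a := phiP hodd ξ α) ?_)
    rw [h2', hα]
  rw [hα, hβ]

lemma chiC_injective (hodd : Odd (Fintype.card G)) (ξ ζ : AddChar G ℂ) :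
    Injective (fun p : AddChar G ℂ × AddChar G ℂ => chiC hodd ξ ζ p.1 p.2) := by
  rintro ⟨α, β⟩ ⟨α', β'⟩ hh
  simp only [chiC, Prod.mk.injEq] at hh
  obtain ⟨h1', h2'⟩ := hh
  have e : ∀ a b : AddChar G ℂ, a * a = (b * a) * (b⁻¹ * a) := by
    intro a b; rw [mul_mul_mul_comm, mul_inv_cancel, one_mul]
  have hsq : phiP hodd ζ β * phiP hodd ζ β = phiP hodd ζ β' * phiP hodd ζ β' := by
    rw [e _ (phiP hodd ξ α), h1', h2', ← e _ (phiP hodd ξ α')]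
  have hβ : β = β' := phiP_injective hodd ζ (sq_injective (oddDual hodd) hsq)
  have hα : α = α' := by
    refine phiP_injective hodd ξ (mul_right_cancel (b := phiP hodd ζ β) ?_)
    rw [h1', hβ]
  rw [hα, hβ]

lemma phiP_apply (hodd : Odd (Fintype.card G)) (ξ α : AddChar G ℂ) (z : G) :
    phiP hodd ξ α z = (α * ξ⁻¹) (rr hodd z) := rfl

lemma phiP_four (hodd : Odd (Fintype.card G)) (ξ α : AddChar G ℂ) (x y s t : G) :
    phiP hodd ξ α (x + s) * phiP hodd ξ α (y + t) * phiP hodd ξ α (x - t) *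
      (phiP hodd ξ α (y + s))⁻¹ = α x * (ξ x)⁻¹ := by
  have harg : rr hodd (x + s) + rr hodd (y + t) + rr hodd (x - t) + -(rr hodd (y + s)) = x := by
    rw [← map_neg (rr hodd), ← map_add (rr hodd), ← map_add (rr hodd), ← map_add (rr hodd),
      show x + s + (y + t) + (x - t) + -(y + s) = x + x from by abel, rr_double]
  rw [phiP_apply, phiP_apply, phiP_apply, phiP_apply, ← AddChar.map_neg_eq_inv,
    ← AddChar.map_add_eq_mul, ← AddChar.map_add_eq_mul, ← AddChar.map_add_eq_mul, harg,
    AddChar.mul_apply, AddChar.inv_apply']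

lemma phiP_four' (hodd : Odd (Fintype.card G)) (ζ β : AddChar G ℂ) (x y s t : G) :
    (phiP hodd ζ β (x + s))⁻¹ * phiP hodd ζ β (y + t) * phiP hodd ζ β (x - t) *
      phiP hodd ζ β (y + s) = β y * (ζ y)⁻¹ := by
  have harg : -(rr hodd (x + s)) + rr hodd (y + t) + rr hodd (x - t) + rr hodd (y + s) = y := by
    rw [← map_neg (rr hodd), ← map_add (rr hodd), ← map_add (rr hodd), ← map_add (rr hodd),
      show -(x + s) + (y + t) + (x - t) + (y + s) = y + y from by abel, rr_double]
  rw [phiP_apply, phiP_apply, phiP_apply, phiP_apply, ← AddChar.map_neg_eq_inv,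
    ← AddChar.map_add_eq_mul, ← AddChar.map_add_eq_mul, ← AddChar.map_add_eq_mul, harg,
    AddChar.mul_apply, AddChar.inv_apply']

lemma charId (hodd : Odd (Fintype.card G)) (ξ ζ α β : AddChar G ℂ) (x y s t : G) :
    (chiA hodd ξ ζ α β).1 (x + s) * (chiA hodd ξ ζ α β).2 (y + t) *
      ((chiC hodd ξ ζ α β).1 (x - t) * (chiC hodd ξ ζ α β).2 (y + s))
    = α x * β y * (ξ s * ζ t) := by
  have hne : ∀ (χ : AddChar G ℂ) (z : G), χ z ≠ 0 := fun χ z => (χ.val_isUnit z).ne_zero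
  simp only [chiA, chiC, AddChar.mul_apply, AddChar.inv_apply']
  rw [ξ.map_add_eq_mul x s, ζ.map_add_eq_mul y t]
  have Pφ := phiP_four hodd ξ α x y s t
  have Pψ := phiP_four' hodd ζ β x y s t
  calc phiP hodd ξ α (x + s) * (phiP hodd ζ β (x + s))⁻¹ * (ξ x * ξ s) *
        (phiP hodd ξ α (y + t) * phiP hodd ζ β (y + t) * (ζ y * ζ t)) *
        (phiP hodd ξ α (x - t) * phiP hodd ζ β (x - t) *
          ((phiP hodd ξ α (y + s))⁻¹ * phiP hodd ζ β (y + s)))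
      = (phiP hodd ξ α (x + s) * phiP hodd ξ α (y + t) * phiP hodd ξ α (x - t) *
          (phiP hodd ξ α (y + s))⁻¹) *
        ((phiP hodd ζ β (x + s))⁻¹ * phiP hodd ζ β (y + t) * phiP hodd ζ β (x - t) *
          phiP hodd ζ β (y + s)) * ((ξ x * ξ s) * (ζ y * ζ t)) := by ring
    _ = (α x * (ξ x)⁻¹) * (β y * (ζ y)⁻¹) * ((ξ x * ξ s) * (ζ y * ζ t)) := by rw [Pφ, Pψ]
    _ = α x * β y * (ξ s * ζ t) := by
        field_simp [hne ξ x, hne ζ y]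

lemma sum2_eq {A B M : Type*} [Fintype A] [Fintype B] [AddCommMonoid M] (F : A → B → M) :
    ∑ x : A, ∑ y : B, F x y = ∑ u : A × B, F u.1 u.2 :=
  (Fintype.sum_prod_type (fun u : A × B => F u.1 u.2)).symm

lemma T_eq (hodd : Odd (Fintype.card G)) (g h : G × G → ℂ) (ξ ζ α β : AddChar G ℂ) :
    ((Fintype.card G : ℂ))⁻¹ ^ 4 * ∑ x : G, ∑ y : G, ∑ s : G, ∑ t : G,
        α x * β y * g (x + s, y + t) * h (x - t, y + s) * ξ s * ζ t
    = (((Fintype.card G : ℂ))⁻¹ ^ 2 * ∑ a : G, ∑ b : G,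
          g (a, b) * (chiA hodd ξ ζ α β).1 a * (chiA hodd ξ ζ α β).2 b)
      * (((Fintype.card G : ℂ))⁻¹ ^ 2 * ∑ c : G, ∑ d : G,
          h (c, d) * (chiC hodd ξ ζ α β).1 c * (chiC hodd ξ ζ α β).2 d) := by
  have hsum : (∑ x : G, ∑ y : G, ∑ s : G, ∑ t : G,
        α x * β y * g (x + s, y + t) * h (x - t, y + s) * ξ s * ζ t)
      = ∑ p : (G × G) × (G × G),
          α p.1.1 * β p.1.2 * g (p.1.1 + p.2.1, p.1.2 + p.2.2) *
            h (p.1.1 - p.2.2, p.1.2 + p.2.1) * ξ p.2.1 * ζ p.2.2 := by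
    rw [sum2_eq (fun x y => ∑ s : G, ∑ t : G,
      α x * β y * g (x + s, y + t) * h (x - t, y + s) * ξ s * ζ t)]
    rw [show (∑ u : G × G, ∑ s : G, ∑ t : G,
        α u.1 * β u.2 * g (u.1 + s, u.2 + t) * h (u.1 - t, u.2 + s) * ξ s * ζ t)
      = ∑ u : G × G, ∑ v : G × G,
        α u.1 * β u.2 * g (u.1 + v.1, u.2 + v.2) * h (u.1 - v.2, u.2 + v.1) * ξ v.1 * ζ v.2
      from Finset.sum_congr rfl fun u _ => sum2_eq _]
    exact sum2_eq _
  have hkey : (∑ p : (G × G) × (G × G),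
        α p.1.1 * β p.1.2 * g (p.1.1 + p.2.1, p.1.2 + p.2.2) *
          h (p.1.1 - p.2.2, p.1.2 + p.2.1) * ξ p.2.1 * ζ p.2.2)
      = ∑ q : (G × G) × (G × G),
          (g q.1 * (chiA hodd ξ ζ α β).1 q.1.1 * (chiA hodd ξ ζ α β).2 q.1.2) *
          (h q.2 * (chiC hodd ξ ζ α β).1 q.2.1 * (chiC hodd ξ ζ α β).2 q.2.2) := by
    refine Fintype.sum_bijective shear (shear_bijective hodd) _ _ ?_
    rintro ⟨⟨x, y⟩, ⟨s, t⟩⟩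
    simp only [shear]
    rw [show (g (x + s, y + t) * (chiA hodd ξ ζ α β).1 (x + s) * (chiA hodd ξ ζ α β).2 (y + t)) *
        (h (x - t, y + s) * (chiC hodd ξ ζ α β).1 (x - t) * (chiC hodd ξ ζ α β).2 (y + s))
      = g (x + s, y + t) * h (x - t, y + s) *
          ((chiA hodd ξ ζ α β).1 (x + s) * (chiA hodd ξ ζ α β).2 (y + t) *
            ((chiC hodd ξ ζ α β).1 (x - t) * (chiC hodd ξ ζ α β).2 (y + s))) from by ring,
      charId hodd ξ ζ α β x y s t]
    ring
  have hrhs : (∑ a : G, ∑ b : G, g (a, b) * (chiA hodd ξ ζ α β).1 a * (chiA hodd ξ ζ α β).2 b)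
        * (∑ c : G, ∑ d : G, h (c, d) * (chiC hodd ξ ζ α β).1 c * (chiC hodd ξ ζ α β).2 d)
      = ∑ q : (G × G) × (G × G),
          (g q.1 * (chiA hodd ξ ζ α β).1 q.1.1 * (chiA hodd ξ ζ α β).2 q.1.2) *
          (h q.2 * (chiC hodd ξ ζ α β).1 q.2.1 * (chiC hodd ξ ζ α β).2 q.2.2) := by
    rw [sum2_eq (fun a b => g (a, b) * (chiA hodd ξ ζ α β).1 a * (chiA hodd ξ ζ α β).2 b),
      sum2_eq (fun c d => h (c, d) * (chiC hodd ξ ζ α β).1 c * (chiC hodd ξ ζ α β).2 d),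
      Finset.sum_mul_sum]
    conv_rhs => rw [Fintype.sum_prod_type]
  rw [hsum, hkey, show (((Fintype.card G : ℂ))⁻¹ ^ 2 * ∑ a : G, ∑ b : G,
        g (a, b) * (chiA hodd ξ ζ α β).1 a * (chiA hodd ξ ζ α β).2 b)
      * (((Fintype.card G : ℂ))⁻¹ ^ 2 * ∑ c : G, ∑ d : G,
        h (c, d) * (chiC hodd ξ ζ α β).1 c * (chiC hodd ξ ζ α β).2 d)
    = ((Fintype.card G : ℂ))⁻¹ ^ 4 *
      ((∑ a : G, ∑ b : G, g (a, b) * (chiA hodd ξ ζ α β).1 a * (chiA hodd ξ ζ α β).2 b)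
        * (∑ c : G, ∑ d : G, h (c, d) * (chiC hodd ξ ζ α β).1 c * (chiC hodd ξ ζ α β).2 d))
    from by ring, hrhs]

lemma sum4_eq (F : G → G → G → G → ℂ) :
    ∑ x : G, ∑ y : G, ∑ s : G, ∑ t : G, F x y s t
      = ∑ p : (G × G) × (G × G), F p.1.1 p.1.2 p.2.1 p.2.2 := by
  rw [sum2_eq (fun x y => ∑ s : G, ∑ t : G, F x y s t),
    show (∑ u : G × G, ∑ s : G, ∑ t : G, F u.1 u.2 s t)
      = ∑ u : G × G, ∑ v : G × G, F u.1 u.2 v.1 v.2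
      from Finset.sum_congr rfl fun u _ => sum2_eq _]
  exact sum2_eq (fun u v : G × G => F u.1 u.2 v.1 v.2)

lemma swap_out {A B C : Type*} [Fintype A] [Fintype B] [Fintype C] (F : A → B → C → ℂ) :
    ∑ p : A, ∑ ξ : B, ∑ ζ : C, F p ξ ζ = ∑ ξ : B, ∑ ζ : C, ∑ p : A, F p ξ ζ := by
  rw [Finset.sum_comm]
  exact Finset.sum_congr rfl fun ξ _ => Finset.sum_comm

lemma sum_comp_le {ι κ : Type*} [Fintype ι] [Fintype κ] (e : ι → κ) (he : Injective e)
    (F : κ → ℝ) (hF : ∀ x, 0 ≤ F x) : ∑ i : ι, F (e i) ≤ ∑ k : κ, F k := by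
  classical
  rw [show (∑ i : ι, F (e i)) = ∑ k ∈ Finset.univ.image e, F k from
    (Finset.sum_image fun x _ y _ hxy => he hxy).symm]
  exact Finset.sum_le_sum_of_subset_of_nonneg (Finset.subset_univ _) fun k _ _ => hF k

lemma cs_sqrt {ι : Type*} [Fintype ι] (a b : ι → ℝ) (ha : ∀ i, 0 ≤ a i) (hb : ∀ i, 0 ≤ b i) :
    ∑ i : ι, a i * b i ≤ Real.sqrt (∑ i : ι, a i ^ 2) * Real.sqrt (∑ i : ι, b i ^ 2) := by
  have h := Finset.sum_mul_sq_le_sq_mul_sq Finset.univ a b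
  have h0 : 0 ≤ ∑ i : ι, a i * b i :=
    Finset.sum_nonneg fun i _ => mul_nonneg (ha i) (hb i)
  have h2 := Real.sqrt_le_sqrt h
  rwa [Real.sqrt_sq h0,
    Real.sqrt_mul (Finset.sum_nonneg fun i _ => sq_nonneg _)] at h2

lemma fixed_char_bound (hodd : Odd (Fintype.card G)) (f g h : G × G → ℂ)
    (fhat : AddChar G ℂ → AddChar G ℂ → ℂ)
    (hfhat : ∀ ξ ζ, fhat ξ ζ = ((Fintype.card G : ℂ))⁻¹ ^ 2 *
      ∑ x : G, ∑ y : G, f (x, y) * (starRingEnd ℂ) (ξ x) * (starRingEnd ℂ) (ζ y))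
    (ξ ζ : AddChar G ℂ) :
    ‖((Fintype.card G : ℂ))⁻¹ ^ 4 * ∑ x : G, ∑ y : G, ∑ s : G, ∑ t : G,
        f (x, y) * g (x + s, y + t) * h (x - t, y + s) * ξ s * ζ t‖
    ≤ (⨆ p : AddChar G ℂ × AddChar G ℂ, ‖fhat p.1 p.2‖) *
      Real.sqrt (((Fintype.card G : ℝ))⁻¹ ^ 2 * ∑ x : G, ∑ y : G, ‖g (x, y)‖ ^ 2) *
      Real.sqrt (((Fintype.card G : ℝ))⁻¹ ^ 2 * ∑ x : G, ∑ y : G, ‖h (x, y)‖ ^ 2) := by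
  classical
  set gco : (AddChar G ℂ) × (AddChar G ℂ) → ℂ := fun Q =>
    ((Fintype.card G : ℂ))⁻¹ ^ 2 * ∑ a : G, ∑ b : G, g (a, b) * Q.1 a * Q.2 b with hgco
  set hco : (AddChar G ℂ) × (AddChar G ℂ) → ℂ := fun Q =>
    ((Fintype.card G : ℂ))⁻¹ ^ 2 * ∑ c : G, ∑ d : G, h (c, d) * Q.1 c * Q.2 d with hhco
  have hf : ∀ x y : G, f (x, y) = ∑ α : AddChar G ℂ, ∑ β : AddChar G ℂ, (fhat α β * α x) * β y := by
    intro x y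
    calc f (x, y) = ∑ α : AddChar G ℂ, ∑ β : AddChar G ℂ,
        ((((Fintype.card G : ℂ))⁻¹ ^ 2 *
          ∑ a : G, ∑ b : G, f (a, b) * (starRingEnd ℂ) (α a) * (starRingEnd ℂ) (β b))
          * α x) * β y := (fourier_inversion2 f x y).symm
      _ = ∑ α : AddChar G ℂ, ∑ β : AddChar G ℂ, (fhat α β * α x) * β y :=
        Finset.sum_congr rfl fun α _ => Finset.sum_congr rfl fun β _ => by rw [← hfhat α β]
  have hpt : ∀ x y s t : G,
      f (x, y) * g (x + s, y + t) * h (x - t, y + s) * ξ s * ζ t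
      = ∑ α : AddChar G ℂ, ∑ β : AddChar G ℂ, fhat α β *
          (α x * β y * g (x + s, y + t) * h (x - t, y + s) * ξ s * ζ t) := by
    intro x y s t
    rw [hf x y]
    simp only [Finset.mul_sum, Finset.sum_mul]
    exact Finset.sum_congr rfl fun α _ => Finset.sum_congr rfl fun β _ => by ring
  have hexp : ((Fintype.card G : ℂ))⁻¹ ^ 4 * ∑ x : G, ∑ y : G, ∑ s : G, ∑ t : G,
        f (x, y) * g (x + s, y + t) * h (x - t, y + s) * ξ s * ζ t
      = ∑ P : (AddChar G ℂ) × (AddChar G ℂ), fhat P.1 P.2 * (gco (chiA hodd ξ ζ P.1 P.2) * hco (chiC hodd ξ ζ P.1 P.2)) := by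
    rw [show (∑ x : G, ∑ y : G, ∑ s : G, ∑ t : G,
        f (x, y) * g (x + s, y + t) * h (x - t, y + s) * ξ s * ζ t)
      = ∑ x : G, ∑ y : G, ∑ s : G, ∑ t : G, ∑ α : AddChar G ℂ, ∑ β : AddChar G ℂ, fhat α β *
          (α x * β y * g (x + s, y + t) * h (x - t, y + s) * ξ s * ζ t)
      from Finset.sum_congr rfl fun x _ => Finset.sum_congr rfl fun y _ =>
        Finset.sum_congr rfl fun s _ => Finset.sum_congr rfl fun t _ => hpt x y s t]
    rw [sum4_eq (fun x y s t => ∑ α : AddChar G ℂ, ∑ β : AddChar G ℂ, fhat α β *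
      (α x * β y * g (x + s, y + t) * h (x - t, y + s) * ξ s * ζ t))]
    rw [swap_out (fun (p : (G × G) × (G × G)) (α : AddChar G ℂ) (β : AddChar G ℂ) => fhat α β *
      (α p.1.1 * β p.1.2 * g (p.1.1 + p.2.1, p.1.2 + p.2.2) *
        h (p.1.1 - p.2.2, p.1.2 + p.2.1) * ξ p.2.1 * ζ p.2.2))]
    rw [Finset.mul_sum]
    rw [show (∑ P : (AddChar G ℂ) × (AddChar G ℂ), fhat P.1 P.2 *
        (gco (chiA hodd ξ ζ P.1 P.2) * hco (chiC hodd ξ ζ P.1 P.2)))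
      = ∑ α : AddChar G ℂ, ∑ β : AddChar G ℂ, fhat α β * (gco (chiA hodd ξ ζ α β) * hco (chiC hodd ξ ζ α β))
      from (sum2_eq fun α β => fhat α β * (gco (chiA hodd ξ ζ α β) * hco (chiC hodd ξ ζ α β))).symm]
    refine Finset.sum_congr rfl fun α _ => ?_
    rw [Finset.mul_sum]
    refine Finset.sum_congr rfl fun β _ => ?_
    rw [← Finset.mul_sum, mul_comm (((Fintype.card G : ℂ))⁻¹ ^ 4), mul_assoc]
    congr 1
    rw [mul_comm, ← sum4_eq (fun x y s t =>
      α x * β y * g (x + s, y + t) * h (x - t, y + s) * ξ s * ζ t), T_eq hodd g h ξ ζ α β]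
  rw [hexp]
  have hM : ∀ P : (AddChar G ℂ) × (AddChar G ℂ), ‖fhat P.1 P.2‖ ≤ ⨆ p : (AddChar G ℂ) × (AddChar G ℂ), ‖fhat p.1 p.2‖ := fun P =>
    le_ciSup (f := fun p : (AddChar G ℂ) × (AddChar G ℂ) => ‖fhat p.1 p.2‖)
      (Finite.bddAbove_range _) P
  have hM0 : 0 ≤ ⨆ p : (AddChar G ℂ) × (AddChar G ℂ), ‖fhat p.1 p.2‖ :=
    le_trans (norm_nonneg _) (hM ⟨1, 1⟩)
  calc ‖∑ P : (AddChar G ℂ) × (AddChar G ℂ), fhat P.1 P.2 * (gco (chiA hodd ξ ζ P.1 P.2) * hco (chiC hodd ξ ζ P.1 P.2))‖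
      ≤ ∑ P : (AddChar G ℂ) × (AddChar G ℂ), ‖fhat P.1 P.2‖ *
          (‖gco (chiA hodd ξ ζ P.1 P.2)‖ * ‖hco (chiC hodd ξ ζ P.1 P.2)‖) := by
        refine le_trans (norm_sum_le _ _) (le_of_eq (Finset.sum_congr rfl fun P _ => ?_))
        rw [norm_mul, norm_mul]
    _ ≤ ∑ P : (AddChar G ℂ) × (AddChar G ℂ), (⨆ p : (AddChar G ℂ) × (AddChar G ℂ), ‖fhat p.1 p.2‖) *
          (‖gco (chiA hodd ξ ζ P.1 P.2)‖ * ‖hco (chiC hodd ξ ζ P.1 P.2)‖) := by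
        refine Finset.sum_le_sum fun P _ => mul_le_mul_of_nonneg_right (hM P) ?_
        exact mul_nonneg (norm_nonneg _) (norm_nonneg _)
    _ = (⨆ p : (AddChar G ℂ) × (AddChar G ℂ), ‖fhat p.1 p.2‖) *
          ∑ P : (AddChar G ℂ) × (AddChar G ℂ), ‖gco (chiA hodd ξ ζ P.1 P.2)‖ * ‖hco (chiC hodd ξ ζ P.1 P.2)‖ := by
        rw [← Finset.mul_sum]
    _ ≤ (⨆ p : (AddChar G ℂ) × (AddChar G ℂ), ‖fhat p.1 p.2‖) *
          (Real.sqrt (∑ P : (AddChar G ℂ) × (AddChar G ℂ), ‖gco (chiA hodd ξ ζ P.1 P.2)‖ ^ 2) *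
           Real.sqrt (∑ P : (AddChar G ℂ) × (AddChar G ℂ), ‖hco (chiC hodd ξ ζ P.1 P.2)‖ ^ 2)) := by
        refine mul_le_mul_of_nonneg_left ?_ hM0
        exact cs_sqrt _ _ (fun P => norm_nonneg _) (fun P => norm_nonneg _)
    _ ≤ (⨆ p : (AddChar G ℂ) × (AddChar G ℂ), ‖fhat p.1 p.2‖) *
          (Real.sqrt (((Fintype.card G : ℝ))⁻¹ ^ 2 * ∑ x : G, ∑ y : G, ‖g (x, y)‖ ^ 2) *
           Real.sqrt (((Fintype.card G : ℝ))⁻¹ ^ 2 * ∑ x : G, ∑ y : G, ‖h (x, y)‖ ^ 2)) := by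
        refine mul_le_mul_of_nonneg_left (mul_le_mul ?_ ?_ (Real.sqrt_nonneg _) (Real.sqrt_nonneg _)) hM0
        · refine Real.sqrt_le_sqrt ?_
          calc ∑ P : (AddChar G ℂ) × (AddChar G ℂ), ‖gco (chiA hodd ξ ζ P.1 P.2)‖ ^ 2
              ≤ ∑ Q : (AddChar G ℂ) × (AddChar G ℂ), ‖gco Q‖ ^ 2 :=
                sum_comp_le _ (chiA_injective hodd ξ ζ) (fun Q => ‖gco Q‖ ^ 2)
                  (fun Q => sq_nonneg _)
            _ = ((Fintype.card G : ℝ))⁻¹ ^ 2 * ∑ x : G, ∑ y : G, ‖g (x, y)‖ ^ 2 := by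
                rw [show (∑ Q : (AddChar G ℂ) × (AddChar G ℂ), ‖gco Q‖ ^ 2)
                  = ∑ u : AddChar G ℂ, ∑ v : AddChar G ℂ, ‖gco (u, v)‖ ^ 2 from (sum2_eq fun u v => ‖gco (u, v)‖ ^ 2).symm]
                exact parseval2 g
        · refine Real.sqrt_le_sqrt ?_
          calc ∑ P : (AddChar G ℂ) × (AddChar G ℂ), ‖hco (chiC hodd ξ ζ P.1 P.2)‖ ^ 2
              ≤ ∑ Q : (AddChar G ℂ) × (AddChar G ℂ), ‖hco Q‖ ^ 2 :=
                sum_comp_le _ (chiC_injective hodd ξ ζ) (fun Q => ‖hco Q‖ ^ 2)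
                  (fun Q => sq_nonneg _)
            _ = ((Fintype.card G : ℝ))⁻¹ ^ 2 * ∑ x : G, ∑ y : G, ‖h (x, y)‖ ^ 2 := by
                rw [show (∑ Q : (AddChar G ℂ) × (AddChar G ℂ), ‖hco Q‖ ^ 2)
                  = ∑ u : AddChar G ℂ, ∑ v : AddChar G ℂ, ‖hco (u, v)‖ ^ 2 from (sum2_eq fun u v => ‖hco (u, v)‖ ^ 2).symm]
                exact parseval2 h
    _ = (⨆ p : (AddChar G ℂ) × (AddChar G ℂ), ‖fhat p.1 p.2‖) *
          Real.sqrt (((Fintype.card G : ℝ))⁻¹ ^ 2 * ∑ x : G, ∑ y : G, ‖g (x, y)‖ ^ 2) *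
          Real.sqrt (((Fintype.card G : ℝ))⁻¹ ^ 2 * ∑ x : G, ∑ y : G, ‖h (x, y)‖ ^ 2) := by
        ring

end LambdaAux
/-- For a finite abelian group `G` of odd order, `f,g,h : G² → ℂ` and
`χ : G → ℂ`, one has `|Λ_χ(f,g,h)| ≤ ‖f̂‖_{ℓ^∞(Ĝ²)} ‖g‖_{L²(G²)} ‖h‖_{L²(G²)} ‖χ̂‖_{ℓ¹(Ĝ)}²`. -/
theorem lambda_weighted_fourier_bound (G : Type*) [AddCommGroup G] [Fintype G]
    (hodd : Odd (Fintype.card G)) (f g h : G × G → ℂ) (χ : G → ℂ)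
    (Λ : ℂ)
    (hΛ : Λ = ((Fintype.card G : ℂ))⁻¹ ^ 4 *
      ∑ x : G, ∑ y : G, ∑ s : G, ∑ t : G,
        f (x, y) * g (x + s, y + t) * h (x - t, y + s) * χ s * χ t)
    (fhat : AddChar G ℂ → AddChar G ℂ → ℂ)
    (hfhat : ∀ ξ ζ, fhat ξ ζ = ((Fintype.card G : ℂ))⁻¹ ^ 2 *
      ∑ x : G, ∑ y : G, f (x, y) * (starRingEnd ℂ) (ξ x) * (starRingEnd ℂ) (ζ y))
    (χhat : AddChar G ℂ → ℂ)
    (hχhat : ∀ ξ, χhat ξ = ((Fintype.card G : ℂ))⁻¹ *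
      ∑ s : G, χ s * (starRingEnd ℂ) (ξ s)) :
    ‖Λ‖ ≤ (⨆ p : AddChar G ℂ × AddChar G ℂ, ‖fhat p.1 p.2‖) *
      Real.sqrt (((Fintype.card G : ℝ))⁻¹ ^ 2 * ∑ x : G, ∑ y : G, ‖g (x, y)‖ ^ 2) *
      Real.sqrt (((Fintype.card G : ℝ))⁻¹ ^ 2 * ∑ x : G, ∑ y : G, ‖h (x, y)‖ ^ 2) *
      (∑ ξ : AddChar G ℂ, ‖χhat ξ‖) ^ 2 := by
  classical
  have hχ : ∀ s : G, χ s = ∑ ξ : AddChar G ℂ, χhat ξ * ξ s := by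
    intro s
    calc χ s = ∑ ξ : AddChar G ℂ,
        (((Fintype.card G : ℂ))⁻¹ * ∑ u : G, χ u * (starRingEnd ℂ) (ξ u)) * ξ s :=
        (LambdaAux.fourier_inversion χ s).symm
      _ = ∑ ξ : AddChar G ℂ, χhat ξ * ξ s :=
        Finset.sum_congr rfl fun ξ _ => by rw [← hχhat ξ]
  have hpt : ∀ x y s t : G,
      f (x, y) * g (x + s, y + t) * h (x - t, y + s) * χ s * χ t
      = ∑ ξ : AddChar G ℂ, ∑ ζ : AddChar G ℂ, (χhat ξ * χhat ζ) *
          (f (x, y) * g (x + s, y + t) * h (x - t, y + s) * ξ s * ζ t) := by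
    intro x y s t
    rw [hχ s, hχ t]
    simp only [Finset.mul_sum, Finset.sum_mul]
    rw [Finset.sum_comm]
    exact Finset.sum_congr rfl fun ξ _ => Finset.sum_congr rfl fun ζ _ => by ring
  have hΛ2 : Λ = ∑ ξ : AddChar G ℂ, ∑ ζ : AddChar G ℂ, (χhat ξ * χhat ζ) *
      (((Fintype.card G : ℂ))⁻¹ ^ 4 * ∑ x : G, ∑ y : G, ∑ s : G, ∑ t : G,
        f (x, y) * g (x + s, y + t) * h (x - t, y + s) * ξ s * ζ t) := by
    rw [hΛ]
    rw [show (∑ x : G, ∑ y : G, ∑ s : G, ∑ t : G,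
        f (x, y) * g (x + s, y + t) * h (x - t, y + s) * χ s * χ t)
      = ∑ x : G, ∑ y : G, ∑ s : G, ∑ t : G, ∑ ξ : AddChar G ℂ, ∑ ζ : AddChar G ℂ,
          (χhat ξ * χhat ζ) * (f (x, y) * g (x + s, y + t) * h (x - t, y + s) * ξ s * ζ t)
      from Finset.sum_congr rfl fun x _ => Finset.sum_congr rfl fun y _ =>
        Finset.sum_congr rfl fun s _ => Finset.sum_congr rfl fun t _ => hpt x y s t]
    rw [LambdaAux.sum4_eq (fun x y s t => ∑ ξ : AddChar G ℂ, ∑ ζ : AddChar G ℂ,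
      (χhat ξ * χhat ζ) * (f (x, y) * g (x + s, y + t) * h (x - t, y + s) * ξ s * ζ t))]
    rw [LambdaAux.swap_out (fun (p : (G × G) × (G × G)) (ξ : AddChar G ℂ) (ζ : AddChar G ℂ) =>
      (χhat ξ * χhat ζ) * (f (p.1.1, p.1.2) * g (p.1.1 + p.2.1, p.1.2 + p.2.2) *
        h (p.1.1 - p.2.2, p.1.2 + p.2.1) * ξ p.2.1 * ζ p.2.2))]
    rw [Finset.mul_sum]
    refine Finset.sum_congr rfl fun ξ _ => ?_
    rw [Finset.mul_sum]
    refine Finset.sum_congr rfl fun ζ _ => ?_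
    rw [← Finset.mul_sum, ← LambdaAux.sum4_eq (fun x y s t =>
      f (x, y) * g (x + s, y + t) * h (x - t, y + s) * ξ s * ζ t)]
    ring
  rw [hΛ2]
  have hB : 0 ≤ (⨆ p : AddChar G ℂ × AddChar G ℂ, ‖fhat p.1 p.2‖) *
      Real.sqrt (((Fintype.card G : ℝ))⁻¹ ^ 2 * ∑ x : G, ∑ y : G, ‖g (x, y)‖ ^ 2) *
      Real.sqrt (((Fintype.card G : ℝ))⁻¹ ^ 2 * ∑ x : G, ∑ y : G, ‖h (x, y)‖ ^ 2) := by
    have h0 : 0 ≤ ⨆ p : AddChar G ℂ × AddChar G ℂ, ‖fhat p.1 p.2‖ :=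
      le_trans (norm_nonneg (fhat 1 1))
        (le_ciSup (f := fun p : AddChar G ℂ × AddChar G ℂ => ‖fhat p.1 p.2‖)
          (Finite.bddAbove_range _) ⟨1, 1⟩)
    exact mul_nonneg (mul_nonneg h0 (Real.sqrt_nonneg _)) (Real.sqrt_nonneg _)
  calc ‖∑ ξ : AddChar G ℂ, ∑ ζ : AddChar G ℂ, (χhat ξ * χhat ζ) *
        (((Fintype.card G : ℂ))⁻¹ ^ 4 * ∑ x : G, ∑ y : G, ∑ s : G, ∑ t : G,
          f (x, y) * g (x + s, y + t) * h (x - t, y + s) * ξ s * ζ t)‖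
      ≤ ∑ ξ : AddChar G ℂ, ∑ ζ : AddChar G ℂ, ‖(χhat ξ * χhat ζ) *
          (((Fintype.card G : ℂ))⁻¹ ^ 4 * ∑ x : G, ∑ y : G, ∑ s : G, ∑ t : G,
            f (x, y) * g (x + s, y + t) * h (x - t, y + s) * ξ s * ζ t)‖ :=
        le_trans (norm_sum_le _ _) (Finset.sum_le_sum fun ξ _ => norm_sum_le _ _)
    _ ≤ ∑ ξ : AddChar G ℂ, ∑ ζ : AddChar G ℂ, (‖χhat ξ‖ * ‖χhat ζ‖) *
          ((⨆ p : AddChar G ℂ × AddChar G ℂ, ‖fhat p.1 p.2‖) *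
            Real.sqrt (((Fintype.card G : ℝ))⁻¹ ^ 2 * ∑ x : G, ∑ y : G, ‖g (x, y)‖ ^ 2) *
            Real.sqrt (((Fintype.card G : ℝ))⁻¹ ^ 2 * ∑ x : G, ∑ y : G, ‖h (x, y)‖ ^ 2)) := by
        refine Finset.sum_le_sum fun ξ _ => Finset.sum_le_sum fun ζ _ => ?_
        rw [norm_mul, norm_mul]
        exact mul_le_mul_of_nonneg_left
          (LambdaAux.fixed_char_bound hodd f g h fhat hfhat ξ ζ)
          (mul_nonneg (norm_nonneg _) (norm_nonneg _))
    _ = (⨆ p : AddChar G ℂ × AddChar G ℂ, ‖fhat p.1 p.2‖) *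
        Real.sqrt (((Fintype.card G : ℝ))⁻¹ ^ 2 * ∑ x : G, ∑ y : G, ‖g (x, y)‖ ^ 2) *
        Real.sqrt (((Fintype.card G : ℝ))⁻¹ ^ 2 * ∑ x : G, ∑ y : G, ‖h (x, y)‖ ^ 2) *
        (∑ ξ : AddChar G ℂ, ‖χhat ξ‖) ^ 2 := by
        simp only [pow_two, Finset.sum_mul_sum, Finset.mul_sum, Finset.sum_mul]
        refine Finset.sum_congr rfl fun ξ _ => Finset.sum_congr rfl fun ζ _ => by ring
end

section
/- Let F be a finite field with |F| = q and let A be a finite set. If a function F₀ : A³ → F is a 'diagonal tensor', i.e., F₀(x,y,z) = Σ_{a∈A} c_a·δ_a(x)·δ_a(y)·δ_a(z) with all c_a ≠ 0, then the slice rank of F₀ equals |A|, where the slice rank of F₀ is the minimal r such that F₀ is a sum of r functions each of the form f(x)g(y,z), f(y)g(x,z), or f(z)g(x,y). -/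
open Finset

variable {α R : Type*}

/-- A function `α³ → R` is a *slice* if it is of one of the forms `f(x)g(y,z)`,
`f(y)g(x,z)` or `f(z)g(x,y)`. -/
def IsSlice [Mul R] (T : α → α → α → R) : Prop :=
  (∃ f : α → R, ∃ g : α → α → R, ∀ x y z, T x y z = f x * g y z) ∨
  (∃ f : α → R, ∃ g : α → α → R, ∀ x y z, T x y z = f y * g x z) ∨
  (∃ f : α → R, ∃ g : α → α → R, ∀ x y z, T x y z = f z * g x y)

/-- The *slice rank* of `T : α³ → R`: the minimal number of slices summing to `T`. -/
noncomputable def sliceRank [NonUnitalNonAssocSemiring R] (T : α → α → α → R) : ℕ :=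
  sInf {r : ℕ | ∃ c : Fin r → (α → α → α → R),
    (∀ i, IsSlice (c i)) ∧ ∀ x y z, T x y z = ∑ i, c i x y z}

open Module in
lemma exists_support_ge_finrank {F : Type*} [Field F] [Fintype F]
    {A : Type*} [Fintype A] [DecidableEq A] [DecidableEq F] (W : Submodule F (A → F)) :
    ∃ v ∈ W, finrank F W ≤ (univ.filter fun a => v a ≠ 0).card := by
  classical
  obtain ⟨v, hv⟩ := Finite.exists_max
    (fun w : W => (univ.filter fun a => (w : A → F) a ≠ 0).card)
  refine ⟨v, v.2, ?_⟩
  set s := univ.filter fun a => (v : A → F) a ≠ 0 with hs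
  let ρ : W →ₗ[F] (↥s → F) :=
    { toFun := fun w j => (w : A → F) j.1
      map_add' := fun _ _ => rfl
      map_smul' := fun _ _ => rfl }
  have hinj : Function.Injective ρ := by
    rw [← LinearMap.ker_eq_bot, eq_bot_iff]
    intro w hw
    simp only [LinearMap.mem_ker] at hw
    by_contra hne
    have hw0 : (w : A → F) ≠ 0 := by
      simpa [Submodule.mem_bot, ZeroMemClass.coe_eq_zero] using hne
    obtain ⟨j, hj⟩ := Function.ne_iff.mp hw0
    simp only [Pi.zero_apply] at hj
    have hzero : ∀ a ∈ s, (w : A → F) a = 0 := fun a ha => congrFun hw ⟨a, ha⟩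
    have hjs : j ∉ s := fun h => hj (hzero j h)
    have hsub : insert j s ⊆ univ.filter fun a => ((v + w : W) : A → F) a ≠ 0 := by
      intro a ha
      rcases Finset.mem_insert.mp ha with rfl | ha
      · have hvj : (v : A → F) a = 0 := by
          by_contra h; exact hjs (by simp [hs, h])
        simp only [Finset.mem_filter, Finset.mem_univ, true_and]
        simp [hvj, hj]
      · have hva : (v : A → F) a ≠ 0 := (Finset.mem_filter.mp ha).2
        simp only [Finset.mem_filter, Finset.mem_univ, true_and]
        simp [hzero a ha, hva]
    have hlt : s.card < (univ.filter fun a => ((v + w : W) : A → F) a ≠ 0).card := by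
      calc s.card < (insert j s).card := by rw [Finset.card_insert_of_notMem hjs]; omega
        _ ≤ _ := Finset.card_le_card hsub
    exact absurd (hv (v + w)) (not_le.mpr hlt)
  calc finrank F W ≤ finrank F (↥s → F) := LinearMap.finrank_le_finrank_of_injective hinj
    _ = s.card := by rw [finrank_fintype_fun_eq_card, Fintype.card_coe]

/-- Over a finite field `F` with `|F| = q`, a diagonal tensor
`F₀(x,y,z) = Σ_{a∈A} c_a δ_a(x) δ_a(y) δ_a(z)` with all coefficients `c_a ≠ 0` has slice
rank exactly `|A|`. -/
theorem sliceRank_diagonal (F : Type*) [Field F] [Fintype F] (q : ℕ)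
    (hq : Fintype.card F = q)
    (A : Type*) [Fintype A] [DecidableEq A]
    (c : A → F) (hc : ∀ a, c a ≠ 0)
    (F₀ : A → A → A → F)
    (hF₀ : ∀ x y z, F₀ x y z = ∑ a : A,
      c a * (if x = a then 1 else 0) * (if y = a then 1 else 0) * (if z = a then 1 else 0)) :
    sliceRank F₀ = Fintype.card A := by
  classical
  set n := Fintype.card A with hn
  set e : Fin n ≃ A := (Fintype.equivFin A).symm with he
  have hmem : n ∈ {r : ℕ | ∃ c' : Fin r → (A → A → A → F),
      (∀ i, IsSlice (c' i)) ∧ ∀ x y z, F₀ x y z = ∑ i, c' i x y z} := by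
    refine ⟨fun i x y z => (if x = e i then 1 else 0) *
      (c (e i) * ((if y = e i then (1:F) else 0) * (if z = e i then 1 else 0))), ?_, ?_⟩
    · intro i
      exact Or.inl ⟨fun x => if x = e i then 1 else 0,
        fun y z => c (e i) * ((if y = e i then (1:F) else 0) * (if z = e i then 1 else 0)),
        fun x y z => rfl⟩
    · intro x y z
      rw [hF₀]
      exact (Fintype.sum_equiv e _ _ fun i => by ring).symm
  refine le_antisymm (Nat.sInf_le hmem) (le_csInf ⟨n, hmem⟩ ?_)
  rintro r ⟨T, hT, hsum⟩
  -- classify slices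
  set P1 : (A → A → A → F) → Prop :=
    fun S => ∃ f : A → F, ∃ g : A → A → F, ∀ x y z, S x y z = f x * g y z with hP1
  set P2 : (A → A → A → F) → Prop :=
    fun S => ∃ f : A → F, ∃ g : A → A → F, ∀ x y z, S x y z = f y * g x z with hP2
  set S1 := univ.filter fun i => P1 (T i) with hS1
  set S2 := (univ.filter fun i => ¬ P1 (T i)).filter (fun i => P2 (T i)) with hS2
  set S3 := (univ.filter fun i => ¬ P1 (T i)).filter (fun i => ¬ P2 (T i)) with hS3
  have hcard : S1.card + (S2.card + S3.card) = r := by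
    rw [hS2, hS3, Finset.card_filter_add_card_filter_not,
      hS1, Finset.card_filter_add_card_filter_not, card_univ, Fintype.card_fin]
  -- extraction
  let f1 : Fin r → A → F := fun i => if h : P1 (T i) then h.choose else 0
  let g1 : Fin r → A → A → F := fun i => if h : P1 (T i) then h.choose_spec.choose else 0
  have hfg1 : ∀ i, P1 (T i) → ∀ x y z, T i x y z = f1 i x * g1 i y z := by
    intro i h
    simp only [f1, g1, dif_pos h]
    exact h.choose_spec.choose_spec
  let f2 : Fin r → A → F := fun i => if h : P2 (T i) then h.choose else 0
  let g2 : Fin r → A → A → F := fun i => if h : P2 (T i) then h.choose_spec.choose else 0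
  have hfg2 : ∀ i, P2 (T i) → ∀ x y z, T i x y z = f2 i y * g2 i x z := by
    intro i h
    simp only [f2, g2, dif_pos h]
    exact h.choose_spec.choose_spec
  have hP3 : ∀ i, ¬ P1 (T i) → ¬ P2 (T i) → ∃ f : A → F, ∃ g : A → A → F, ∀ x y z, T i x y z = f z * g x y := by
    intro i h1 h2
    rcases hT i with h | h | h
    · exact absurd h h1
    · exact absurd h h2
    · exact h
  let f3 : Fin r → A → F := fun i =>
    if h : ∃ f : A → F, ∃ g : A → A → F, ∀ x y z, T i x y z = f z * g x y then h.choose else 0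
  let g3 : Fin r → A → A → F := fun i =>
    if h : ∃ f : A → F, ∃ g : A → A → F, ∀ x y z, T i x y z = f z * g x y then h.choose_spec.choose else 0
  have hfg3 : ∀ i, (∃ f : A → F, ∃ g : A → A → F, ∀ x y z, T i x y z = f z * g x y) →
      ∀ x y z, T i x y z = f3 i z * g3 i x y := by
    intro i h
    simp only [f3, g3, dif_pos h]
    exact h.choose_spec.choose_spec
  -- the linear map
  let Φ : (A → F) →ₗ[F] (↥S1 → F) :=
    { toFun := fun v s => ∑ x, v x * f1 s.1 x
      map_add' := by intro v w; funext s; simp [add_mul, Finset.sum_add_distrib]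
      map_smul' := by
        intro t v; funext s
        simp [Finset.mul_sum, mul_assoc, smul_eq_mul] }
  have hrk : n ≤ Module.finrank F (LinearMap.ker Φ) + S1.card := by
    have h1 := LinearMap.finrank_range_add_finrank_ker Φ
    have h2 : Module.finrank F (LinearMap.range Φ) ≤ S1.card := by
      refine le_trans (Submodule.finrank_le _) ?_
      rw [Module.finrank_fintype_fun_eq_card, Fintype.card_coe]
    rw [Module.finrank_fintype_fun_eq_card] at h1
    omega
  obtain ⟨v, hvker, hvsupp⟩ := exists_support_ge_finrank (LinearMap.ker Φ)
  have hΦv : ∀ s : ↥S1, ∑ x, v x * f1 s.1 x = 0 := by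
    intro s
    have := LinearMap.mem_ker.mp hvker
    exact congrFun this s
  -- key identity 1
  have key1 : ∀ y z, ∑ x, v x * F₀ x y z = Matrix.diagonal (fun a => c a * v a) y z := by
    intro y z
    simp only [hF₀, Finset.mul_sum]
    rw [Finset.sum_comm]
    have h : ∀ a : A, ∑ x, v x * (c a * (if x = a then (1:F) else 0) *
        (if y = a then 1 else 0) * (if z = a then 1 else 0)) =
        (if y = a then (1:F) else 0) * (if z = a then 1 else 0) * (c a * v a) := by
      intro a
      rw [Finset.sum_eq_single a]
      · by_cases h1 : y = a <;> by_cases h2 : z = a <;> simp [h1, h2] <;> ring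
      · intro b _ hb; simp [hb]
      · simp
    rw [Finset.sum_congr rfl fun a _ => h a]
    by_cases hyz : y = z
    · subst hyz
      rw [Finset.sum_eq_single y]
      · simp [Matrix.diagonal]
      · intro b _ hb
        have : y ≠ b := fun h => hb h.symm
        simp [this]
      · simp
    · rw [Matrix.diagonal_apply_ne _ hyz]
      refine Finset.sum_eq_zero fun b _ => ?_
      by_cases h1 : y = b
      · have : z ≠ b := fun h => hyz (h1.trans h.symm)
        simp [this]
      · simp [h1]
  -- key identity 2
  have key2 : ∀ y z, ∑ x, v x * F₀ x y z =
      (∑ i ∈ S2, f2 i y * ∑ x, v x * g2 i x z) +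
      ∑ i ∈ S3, (∑ x, v x * g3 i x y) * f3 i z := by
    intro y z
    have hL : ∑ x, v x * F₀ x y z = ∑ i, ∑ x, v x * T i x y z := by
      simp only [hsum, Finset.mul_sum]
      exact Finset.sum_comm
    rw [hL]
    rw [← Finset.sum_filter_add_sum_filter_not univ (fun i => P1 (T i))
      (fun i => ∑ x, v x * T i x y z)]
    rw [← Finset.sum_filter_add_sum_filter_not (univ.filter fun i => ¬ P1 (T i))
      (fun i => P2 (T i)) (fun i => ∑ x, v x * T i x y z)]
    have hS1zero : ∑ i ∈ S1, ∑ x, v x * T i x y z = 0 := by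
      refine Finset.sum_eq_zero fun i hi => ?_
      have hp : P1 (T i) := (Finset.mem_filter.mp hi).2
      have : ∑ x, v x * T i x y z = (∑ x, v x * f1 i x) * g1 i y z := by
        rw [Finset.sum_mul]
        exact Finset.sum_congr rfl fun x _ => by rw [hfg1 i hp]; ring
      rw [this, hΦv ⟨i, hi⟩, zero_mul]
    rw [← hS1, ← hS2, ← hS3, hS1zero, zero_add]
    congr 1
    · refine Finset.sum_congr rfl fun i hi => ?_
      have hp : P2 (T i) := (Finset.mem_filter.mp hi).2
      rw [Finset.mul_sum]
      exact Finset.sum_congr rfl fun x _ => by rw [hfg2 i hp]; ring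
    · refine Finset.sum_congr rfl fun i hi => ?_
      have h1 : ¬ P1 (T i) := (Finset.mem_filter.mp (Finset.mem_filter.mp hi).1).2
      have h2 : ¬ P2 (T i) := (Finset.mem_filter.mp hi).2
      have hp := hP3 i h1 h2
      rw [Finset.sum_mul]
      exact Finset.sum_congr rfl fun x _ => by rw [hfg3 i hp]; ring
  -- matrix factorization
  let B : Matrix A (↥S2 ⊕ ↥S3) F :=
    Matrix.of fun y i => Sum.elim (fun t => f2 t.1 y) (fun u => ∑ x, v x * g3 u.1 x y) i
  let C : Matrix (↥S2 ⊕ ↥S3) A F :=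
    Matrix.of fun i z => Sum.elim (fun t => ∑ x, v x * g2 t.1 x z) (fun u => f3 u.1 z) i
  have hM : Matrix.diagonal (fun a => c a * v a) = B * C := by
    ext y z
    rw [Matrix.mul_apply, Fintype.sum_sum_type, ← key1 y z, key2 y z]
    congr 1
    · rw [← Finset.sum_coe_sort S2 (fun i => f2 i y * ∑ x, v x * g2 i x z)]
      rfl
    · rw [← Finset.sum_coe_sort S3 (fun i => (∑ x, v x * g3 i x y) * f3 i z)]
      rfl
  have hrank_le : (Matrix.diagonal fun a => c a * v a).rank ≤ S2.card + S3.card := by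
    rw [hM]
    refine (Matrix.rank_mul_le_left B C).trans ?_
    have := B.rank_le_card_width
    simpa [Fintype.card_sum, Fintype.card_coe] using this
  have hrank_eq : (Matrix.diagonal fun a => c a * v a).rank =
      (univ.filter fun a => v a ≠ 0).card := by
    rw [Matrix.rank_diagonal, Fintype.card_subtype]
    congr 1
    ext a
    simp [mul_ne_zero_iff, hc a]
  rw [hrank_eq] at hrank_le
  omega
end
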